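/- Let d = 2 and μ₂ the measure r·dr on (0,∞). Define R f(r) = χ_{[0,1]}(r) · sup_{t∈[1,2], t≥2r} (1/r) ∫_{t−r}^{t+r} f(z) dz. Then R is bounded from L¹(μ₂) to L^q(μ₂) for every 1 ≤ q < 2, and R is bounded from L¹(μ₂) to weak-L²(μ₂). -/

import Mathlib

open Set MeasureTheory
open scoped ENNReal NNReal

noncomputable section

/-- The measure `μ₂` on `(0,∞)` with density `r`. -/
def mu2 : Measure ℝ :=
  (volume.restrict (Ioi (0 : ℝ))).withDensity fun r => ENNReal.ofReal r

/-- The `L^p(μ)` norm of an `ℝ≥0∞`-valued function (with `p = ∞` meaning the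
essential supremum). -/
def lpNormE (μ : Measure ℝ) (p : ℝ≥0∞) (g : ℝ → ℝ≥0∞) : ℝ≥0∞ :=
  if p = ∞ then essSup g μ else (∫⁻ r, g r ^ p.toReal ∂μ) ^ (1 / p.toReal)

/-- `R f(r) = χ_{[0,1]}(r) · sup_{t∈[1,2], t≥2r} (1/r) ∫_{t−r}^{t+r} f(z) dz`. -/
def Rop (f : ℝ → ℝ≥0∞) (r : ℝ) : ℝ≥0∞ :=
  if 0 ≤ r ∧ r ≤ 1 then
    ⨆ t ∈ {t : ℝ | t ∈ Icc (1 : ℝ) 2 ∧ 2 * r ≤ t},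
      (ENNReal.ofReal r)⁻¹ * ∫⁻ z in Icc (t - r) (t + r), f z
  else 0

/-!
Every interval `[t - r, t + r]` with `t ≥ max 1 (2r)` lies in `[1/2, ∞)`, where the density of
`μ₂` is at least `1/2`; hence `R f r ≤ 2 ‖f‖_{L¹(μ₂)} / r`, and `R f` vanishes for `r > 1`.
Against `r dr`, the function `r⁻¹ χ_{(0,1]}` is in `L^q` for `q < 2` because
`∫₀¹ r^{1-q} dr < ∞`, and in weak-`L²` because `μ₂ {r < s} ≤ s²`.
-/
lemma lintegral_mu2 (f : ℝ → ℝ≥0∞) :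
    ∫⁻ r, f r ∂mu2 = ∫⁻ r in Ioi 0, ENNReal.ofReal r * f r :=
  lintegral_withDensity_eq_lintegral_mul_non_measurable _ ENNReal.measurable_ofReal
    (Filter.Eventually.of_forall fun _ => ENNReal.ofReal_lt_top) f

lemma mu2_apply (s : Set ℝ) : mu2 s = ∫⁻ r in s ∩ Ioi 0, ENNReal.ofReal r := by
  rw [mu2, withDensity_apply' _ s, Measure.restrict_restrict' measurableSet_Ioi]

lemma lpNormE_one (μ : Measure ℝ) (f : ℝ → ℝ≥0∞) : lpNormE μ 1 f = ∫⁻ r, f r ∂μ := by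
  simp [lpNormE]

lemma setLIntegral_le_div_lintegral_mu2 {s : Set ℝ} (hs : MeasurableSet s) {a : ℝ} (ha : 0 < a)
    (hsa : s ⊆ Ici a) (f : ℝ → ℝ≥0∞) :
    ∫⁻ z in s, f z ≤ (∫⁻ z, f z ∂mu2) / ENNReal.ofReal a := by
  have ha0 : ENNReal.ofReal a ≠ 0 := by simpa using ha
  calc ∫⁻ z in s, f z
      ≤ ∫⁻ z in s, (ENNReal.ofReal a)⁻¹ * (ENNReal.ofReal z * f z) := by
        refine setLIntegral_mono' hs fun z hz => ?_
        calc f z = (ENNReal.ofReal a)⁻¹ * (ENNReal.ofReal a * f z) :=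
              (ENNReal.inv_mul_cancel_left ha0 ENNReal.ofReal_ne_top).symm
          _ ≤ _ := by gcongr; exact hsa hz
    _ = (ENNReal.ofReal a)⁻¹ * ∫⁻ z in s, ENNReal.ofReal z * f z :=
        lintegral_const_mul' _ _ (ENNReal.inv_ne_top.2 ha0)
    _ ≤ (ENNReal.ofReal a)⁻¹ * ∫⁻ z in Ioi 0, ENNReal.ofReal z * f z := by
        gcongr
        exact fun z hz => ha.trans_le (hsa hz)
    _ = (∫⁻ z, f z ∂mu2) / ENNReal.ofReal a := by rw [lintegral_mu2, ENNReal.div_eq_inv_mul]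

lemma Rop_le_div (f : ℝ → ℝ≥0∞) (r : ℝ) :
    Rop f r ≤ 2 * (∫⁻ z, f z ∂mu2) / ENNReal.ofReal r := by
  unfold Rop
  split_ifs
  · refine iSup₂_le fun t ⟨⟨ht1, _⟩, htr⟩ => ?_
    rw [ENNReal.div_eq_inv_mul]
    gcongr
    have hsub : Icc (t - r) (t + r) ⊆ Ici (1 / 2) := fun z hz => by
      have := hz.1; simp only [mem_Ici]; linarith
    calc ∫⁻ z in Icc (t - r) (t + r), f z
        ≤ (∫⁻ z, f z ∂mu2) / ENNReal.ofReal (1 / 2) :=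
          setLIntegral_le_div_lintegral_mu2 measurableSet_Icc (by norm_num) hsub f
      _ = 2 * ∫⁻ z, f z ∂mu2 := by
          rw [one_div, ENNReal.ofReal_inv_of_pos two_pos, ENNReal.div_eq_inv_mul, inv_inv]
          simp
  · exact zero_le

lemma Rop_eq_zero_of_one_lt (f : ℝ → ℝ≥0∞) {r : ℝ} (hr : 1 < r) : Rop f r = 0 :=
  if_neg fun h => hr.not_ge h.2

lemma ofReal_mul_div_rpow {r : ℝ} (hr : 0 < r) (M : ℝ≥0∞) {p : ℝ} (hp : 0 ≤ p) :
    ENNReal.ofReal r * (M / ENNReal.ofReal r) ^ p = M ^ p * ENNReal.ofReal (r ^ (1 - p)) := by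
  have h0 : ENNReal.ofReal r ≠ 0 := by simpa using hr
  rw [ENNReal.div_rpow_of_nonneg _ _ hp, ← ENNReal.ofReal_rpow_of_pos hr,
    ENNReal.rpow_sub _ _ h0 ENNReal.ofReal_ne_top, ENNReal.rpow_one, ENNReal.div_eq_inv_mul,
    ENNReal.div_eq_inv_mul]
  ring

lemma lintegral_rpow_mu2_le {g : ℝ → ℝ≥0∞} {M : ℝ≥0∞} (hg : ∀ r, g r ≤ M / ENNReal.ofReal r)
    (hg_one : ∀ r, 1 < r → g r = 0) {p : ℝ} (hp : 0 < p) :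
    ∫⁻ r, g r ^ p ∂mu2 ≤ M ^ p * ∫⁻ r in Ioc 0 1, ENNReal.ofReal (r ^ (1 - p)) := by
  have hpt : ∀ r ∈ Ioi (0 : ℝ),
      ENNReal.ofReal r * g r ^ p ≤
        M ^ p * (Iic 1).indicator (fun r => ENNReal.ofReal (r ^ (1 - p))) r := by
    intro r hr
    by_cases hr1 : r ≤ 1
    · rw [indicator_of_mem (mem_Iic.2 hr1), ← ofReal_mul_div_rpow hr M hp.le]
      gcongr
      exact hg r
    · rw [hg_one r (not_le.1 hr1), ENNReal.zero_rpow_of_pos hp, mul_zero]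
      exact zero_le
  calc ∫⁻ r, g r ^ p ∂mu2
      ≤ ∫⁻ r in Ioi 0, M ^ p * (Iic 1).indicator (fun r => ENNReal.ofReal (r ^ (1 - p))) r := by
        rw [lintegral_mu2]
        exact setLIntegral_mono' measurableSet_Ioi hpt
    _ = M ^ p * ∫⁻ r in Ioc 0 1, ENNReal.ofReal (r ^ (1 - p)) := by
        rw [lintegral_const_mul _ ((by fun_prop : Measurable _).indicator measurableSet_Iic),
          lintegral_indicator measurableSet_Iic, Measure.restrict_restrict measurableSet_Iic,
          Iic_inter_Ioi]

lemma lintegral_Ioc_ofReal_rpow_lt_top {s : ℝ} (hs : -1 < s) :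
    ∫⁻ r in Ioc (0 : ℝ) 1, ENNReal.ofReal (r ^ s) < ∞ :=
  (intervalIntegral.intervalIntegrable_rpow' hs (a := 0) (b := 1)).1.lintegral_lt_top

lemma exists_lpNormE_mu2_le {p : ℝ≥0∞} (hp0 : 0 < p) (hp2 : p < 2) :
    ∃ C : ℝ≥0, ∀ (g : ℝ → ℝ≥0∞) (M : ℝ≥0∞), (∀ r, g r ≤ M / ENNReal.ofReal r) →
      (∀ r, 1 < r → g r = 0) → lpNormE mu2 p g ≤ C * M := by
  have hp_top : p ≠ ∞ := hp2.ne_top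
  set q := p.toReal
  have hq0 : 0 < q := ENNReal.toReal_pos hp0.ne' hp_top
  have hq2 : q < 2 := by simpa using (ENNReal.toReal_lt_toReal hp_top (by simp)).2 hp2
  set J := ∫⁻ r in Ioc (0 : ℝ) 1, ENNReal.ofReal (r ^ (1 - q))
  have hJ : J ^ (1 / q) ≠ ∞ :=
    ENNReal.rpow_ne_top_of_nonneg (by positivity)
      (lintegral_Ioc_ofReal_rpow_lt_top (by linarith)).ne
  refine ⟨(J ^ (1 / q)).toNNReal, fun g M hg hg_one => ?_⟩
  calc lpNormE mu2 p g = (∫⁻ r, g r ^ q ∂mu2) ^ (1 / q) := if_neg hp_top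
    _ ≤ (M ^ q * J) ^ (1 / q) := by gcongr; exact lintegral_rpow_mu2_le hg hg_one hq0
    _ = (J ^ (1 / q)).toNNReal * M := by
        rw [ENNReal.coe_toNNReal hJ, ENNReal.mul_rpow_of_nonneg _ _ (by positivity),
          ← ENNReal.rpow_mul, mul_one_div_cancel hq0.ne', ENNReal.rpow_one, mul_comm]

lemma mu2_Iio_le (b : ℝ) : mu2 (Iio b) ≤ ENNReal.ofReal b ^ 2 := by
  rw [mu2_apply, Iio_inter_Ioi]
  calc ∫⁻ r in Ioo 0 b, ENNReal.ofReal r ≤ ∫⁻ _ in Ioo 0 b, ENNReal.ofReal b :=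
        setLIntegral_mono' measurableSet_Ioo fun r hr => ENNReal.ofReal_le_ofReal hr.2.le
    _ = ENNReal.ofReal b ^ 2 := by rw [setLIntegral_const, Real.volume_Ioo, sub_zero, sq]

lemma mu2_setOf_ofReal_lt_le (c : ℝ≥0∞) : mu2 {r | ENNReal.ofReal r < c} ≤ c ^ 2 := by
  rcases eq_or_ne c ∞ with rfl | hc
  · simp
  have hsub : {r | ENNReal.ofReal r < c} ⊆ Iio c.toReal := fun r hr => by
    by_cases hr0 : 0 ≤ r
    · exact (ENNReal.ofReal_lt_iff_lt_toReal hr0 hc).1 hr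
    · exact (not_le.1 hr0).trans_le ENNReal.toReal_nonneg
  calc mu2 {r | ENNReal.ofReal r < c} ≤ mu2 (Iio c.toReal) := measure_mono hsub
    _ ≤ c ^ 2 := by simpa [ENNReal.ofReal_toReal hc] using mu2_Iio_le c.toReal

lemma mul_mu2_setOf_lt_rpow_le {g : ℝ → ℝ≥0∞} {M : ℝ≥0∞} (hg : ∀ r, g r ≤ M / ENNReal.ofReal r)
    (l : ℝ≥0∞) : l * mu2 {r | l < g r} ^ (1 / 2 : ℝ) ≤ M := by
  rcases eq_or_ne l ∞ with rfl | hl_top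
  · simp
  rcases eq_or_ne l 0 with rfl | hl0
  · simp
  have hsub : {r | l < g r} ⊆ {r | ENNReal.ofReal r < M / l} := fun r hr => by
    have hlt : l * ENNReal.ofReal r < M :=
      (ENNReal.lt_div_iff_mul_lt (Or.inr hl_top) (Or.inl ENNReal.ofReal_ne_top)).1
        ((show l < g r from hr).trans_le (hg r))
    exact (ENNReal.lt_div_iff_mul_lt (Or.inl hl0) (Or.inl hl_top)).2 (by rwa [mul_comm])
  calc l * mu2 {r | l < g r} ^ (1 / 2 : ℝ) ≤ l * ((M / l) ^ 2) ^ (1 / 2 : ℝ) := by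
        gcongr
        exact (measure_mono hsub).trans (mu2_setOf_ofReal_lt_le _)
    _ = M := by
        rw [← ENNReal.rpow_two, ← ENNReal.rpow_mul]
        norm_num
        exact ENNReal.mul_div_cancel hl0 hl_top

theorem Rop_bounds :
    (∀ q : ℝ≥0∞, 1 ≤ q → q < 2 →
      ∃ C : ℝ≥0, ∀ f : ℝ → ℝ≥0∞, Measurable f →
        lpNormE mu2 q (Rop f) ≤ C * lpNormE mu2 1 f) ∧
    (∃ C : ℝ≥0, ∀ f : ℝ → ℝ≥0∞, Measurable f → ∀ l : ℝ≥0∞, 0 < l →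
      l * (mu2 {r | l < Rop f r}) ^ (1 / 2 : ℝ) ≤ C * lpNormE mu2 1 f) := by
  have hRop (f : ℝ → ℝ≥0∞) (r : ℝ) : Rop f r ≤ 2 * lpNormE mu2 1 f / ENNReal.ofReal r := by
    rw [lpNormE_one]
    exact Rop_le_div f r
  refine ⟨fun q hq1 hq2 => ?_, ⟨2, fun f _ l _ => mul_mu2_setOf_lt_rpow_le (hRop f) l⟩⟩
  obtain ⟨C, hC⟩ := exists_lpNormE_mu2_le (zero_lt_one.trans_le hq1) hq2
  refine ⟨C * 2, fun f _ => ?_⟩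
  calc lpNormE mu2 q (Rop f) ≤ C * (2 * lpNormE mu2 1 f) :=
        hC _ _ (hRop f) fun _ => Rop_eq_zero_of_one_lt f
    _ = ↑(C * 2) * lpNormE mu2 1 f := by push_cast; ring
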